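/- arXiv:2602.05460 — 3 statements merged into one kernel-verified Lean document; each statement's English description precedes it below -/
import Mathlib

section
/- Let (r_n) be a sequence of nonnegative reals, (γ_n) a sequence in [0,1], and (a_n) a nonincreasing sequence of nonnegative reals, satisfying r_n ≤ (1 - γ_n) r_{n-1} + γ_n a_n for all n > n_0. Then for all n_0 < m ≤ n: r_n ≤ exp(-Σ_{k=m}^n γ_k)·(r_{n_0} + Σ_{k=n_0+1}^{m-1} γ_k a_k) + a_m. -/
/-- for nonnegative `r_n` with
`r_n ≤ (1 - γ_n) r_{n-1} + γ_n a_n` for `n > n₀`, `γ_n ∈ [0,1]`, `a` nonincreasing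
nonnegative, one has for `n₀ < m ≤ n`:
`r_n ≤ exp(-Σ_{k=m}^n γ_k)(r_{n₀} + Σ_{k=n₀+1}^{m-1} γ_k a_k) + a_m`. -/
theorem recursive_bound_general (r γ a : ℕ → ℝ) (n0 : ℕ)
    (hr : ∀ n, 0 ≤ r n)
    (hγ : ∀ n, γ n ∈ Set.Icc (0:ℝ) 1)
    (ha : ∀ n, 0 ≤ a n)
    (hamono : ∀ m n : ℕ, m ≤ n → a n ≤ a m)
    (hrec : ∀ n, n0 < n → r n ≤ (1 - γ n) * r (n - 1) + γ n * a n) :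
    ∀ m n : ℕ, n0 < m → m ≤ n →
      r n ≤ Real.exp (-(∑ k ∈ Finset.Icc m n, γ k)) *
          (r n0 + ∑ k ∈ Finset.Icc (n0 + 1) (m - 1), γ k * a k) + a m := by
  -- step 0: unrolled bound up to any n ≥ n0
  have hγ0 : ∀ n, 0 ≤ γ n := fun n => (hγ n).1
  have hγ1 : ∀ n, γ n ≤ 1 := fun n => (hγ n).2
  have hunroll : ∀ n, n0 ≤ n → r n ≤ r n0 + ∑ k ∈ Finset.Icc (n0 + 1) n, γ k * a k := by
    intro n hn
    induction n, hn using Nat.le_induction with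
    | base => simp
    | succ n hn ih =>
      have h1 := hrec (n + 1) (Nat.lt_succ_of_le hn)
      simp only [Nat.add_sub_cancel] at h1
      have h2 : (1 - γ (n + 1)) * r n ≤ r n := by
        nlinarith [hr n, hγ0 (n + 1)]
      rw [Finset.sum_Icc_succ_top (by omega : n0 + 1 ≤ n + 1)]
      linarith
  intro m n hm hmn
  set C : ℝ := r n0 + ∑ k ∈ Finset.Icc (n0 + 1) (m - 1), γ k * a k with hC
  have hC0 : 0 ≤ C := by
    have : 0 ≤ ∑ k ∈ Finset.Icc (n0 + 1) (m - 1), γ k * a k :=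
      Finset.sum_nonneg fun k _ => mul_nonneg (hγ0 k) (ha k)
    have := hr n0; positivity
  have hrm1 : r (m - 1) ≤ C := hunroll (m - 1) (by omega)
  -- main induction: product bound
  have hprodbound : r n ≤ (∏ j ∈ Finset.Icc m n, (1 - γ j)) * C + a m := by
    induction n, hmn using Nat.le_induction with
    | base =>
      have h1 := hrec m hm
      rw [Finset.Icc_self, Finset.prod_singleton]
      have : γ m * a m ≤ a m := by nlinarith [hγ1 m, ha m]
      have h2 : (1 - γ m) * r (m - 1) ≤ (1 - γ m) * C :=
        mul_le_mul_of_nonneg_left hrm1 (by linarith [hγ1 m])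
      linarith
    | succ n hn ih =>
      have h1 := hrec (n + 1) (by omega)
      simp only [Nat.add_sub_cancel] at h1
      rw [Finset.prod_Icc_succ_top (by omega : m ≤ n + 1)]
      have han : a (n + 1) ≤ a m := hamono m (n + 1) (by omega)
      have hγn1 : 0 ≤ 1 - γ (n + 1) := by linarith [hγ1 (n + 1)]
      have h2 : (1 - γ (n + 1)) * r n ≤
          (1 - γ (n + 1)) * ((∏ j ∈ Finset.Icc m n, (1 - γ j)) * C + a m) :=
        mul_le_mul_of_nonneg_left ih hγn1
      nlinarith [hγ0 (n + 1), ha m]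
  -- product ≤ exp of minus sum
  have hexp : (∏ j ∈ Finset.Icc m n, (1 - γ j)) ≤
      Real.exp (-(∑ k ∈ Finset.Icc m n, γ k)) := by
    have : ∀ j ∈ Finset.Icc m n, (1 - γ j) ≤ Real.exp (-(γ j)) := by
      intro j _
      have := Real.add_one_le_exp (-(γ j))
      linarith
    calc (∏ j ∈ Finset.Icc m n, (1 - γ j))
        ≤ ∏ j ∈ Finset.Icc m n, Real.exp (-(γ j)) :=
          Finset.prod_le_prod (fun j _ => by linarith [hγ1 j]) this
      _ = Real.exp (∑ j ∈ Finset.Icc m n, -(γ j)) := (Real.exp_sum _ _).symm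
      _ = Real.exp (-(∑ k ∈ Finset.Icc m n, γ k)) := by rw [Finset.sum_neg_distrib]
  have := mul_le_mul_of_nonneg_right hexp hC0
  linarith [hprodbound]
end

section
/- Let (r_n) be nonnegative with r_n ≤ (1 - γ_n) r_{n-1} + γ_n a_n for n > n_0, where γ_n = c/(n^γ + c') with c > 0, c' ≥ 0, γ ∈ (0,1), and (a_n) is nonincreasing and tends to 0. Then for any κ with 0 < κ < c(1 - 2^{γ-1})/(1-γ), there exists C such that r_n ≤ C(exp(-κ n^{1-γ}) + a_{⌈n/2⌉}) for all n; in particular r_n → 0. -/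
open Filter Finset Real Topology Asymptotics

/-!
Where `γₖ ≤ 1`, unrolling the recursion from `m = ⌈n/2⌉` gives
`rₙ ≤ exp (-∑_{m<k≤n} γₖ) rₘ + a_{m+1}`, and `r` is bounded. Comparing with `∫ x^{-g}`,
the sum is at least `c/(1 + c'/m^g) · ((n+1)^{1-g} - (m+1)^{1-g})/(1-g)`, which is
`(c (1 - 2^{g-1})/(1-g) + o(1)) n^{1-g}`, so beats `κ n^{1-g}` for large `n`; the finitely many
small `n` are absorbed into `C`.
-/

theorem exists_forall_le_of_recursion {r γ a : ℕ → ℝ} {n0 : ℕ} {Γ : ℝ}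
    (hr : ∀ n, 0 ≤ r n) (ha0 : ∀ n, 0 ≤ a n) (ha : Antitone a)
    (hγ : ∀ n, n0 < n → 0 ≤ γ n ∧ γ n ≤ Γ)
    (hrec : ∀ n, n0 < n → r n ≤ (1 - γ n) * r (n - 1) + γ n * a n) :
    ∃ B, ∀ n, r n ≤ B := by
  obtain ⟨M, hM⟩ := ((Set.finite_Iic n0).image r).bddAbove
  refine ⟨max M (max (a 0) (Γ * a 0)), fun n => ?_⟩
  induction n with
  | zero => exact le_max_of_le_left (hM ⟨0, Nat.zero_le _, rfl⟩)
  | succ n ih =>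
    rcases le_or_gt (n + 1) n0 with hn | hn
    · exact le_max_of_le_left (hM ⟨n + 1, hn, rfl⟩)
    obtain ⟨hγ0, hγΓ⟩ := hγ (n + 1) hn
    have hstep := hrec (n + 1) hn
    have han : a (n + 1) ≤ a 0 := ha (Nat.zero_le _)
    have hB₁ : a 0 ≤ max M (max (a 0) (Γ * a 0)) := le_max_of_le_right (le_max_left _ _)
    have hB₂ : Γ * a 0 ≤ max M (max (a 0) (Γ * a 0)) := le_max_of_le_right (le_max_right _ _)
    rw [Nat.add_sub_cancel] at hstep
    -- for `γ ≤ 1` the step is a convex combination of values below the bound;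
    -- for `γ > 1` its first term is `≤ 0`
    rcases le_or_gt (γ (n + 1)) 1 with hγ1 | hγ1
    · nlinarith [mul_le_mul_of_nonneg_left ih (sub_nonneg.2 hγ1)]
    · nlinarith [hr n, ha0 (n + 1)]

theorem le_exp_neg_sum_mul_add_of_recursion {r γ a : ℕ → ℝ} {m : ℕ}
    (hrm : 0 ≤ r m) (ham : 0 ≤ a (m + 1)) (ha : Antitone a)
    (hγ : ∀ k, m < k → 0 ≤ γ k ∧ γ k ≤ 1)
    (hrec : ∀ k, m < k → r k ≤ (1 - γ k) * r (k - 1) + γ k * a k)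
    {n : ℕ} (hmn : m ≤ n) :
    r n ≤ exp (-∑ k ∈ Ioc m n, γ k) * r m + a (m + 1) := by
  induction n, hmn using Nat.le_induction with
  | base => simpa using ham
  | succ n hmn ih =>
    obtain ⟨hγ0, hγ1⟩ := hγ (n + 1) (by omega)
    have hstep := hrec (n + 1) (by omega)
    rw [Nat.add_sub_cancel] at hstep
    have hone_sub_le : 1 - γ (n + 1) ≤ exp (-γ (n + 1)) := by
      linarith [add_one_le_exp (-γ (n + 1))]
    have han : γ (n + 1) * a (n + 1) ≤ γ (n + 1) * a (m + 1) :=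
      mul_le_mul_of_nonneg_left (ha (by omega)) hγ0
    rw [sum_Ioc_succ_top hmn, neg_add, exp_add]
    calc r (n + 1)
        ≤ (1 - γ (n + 1)) * (exp (-∑ k ∈ Ioc m n, γ k) * r m + a (m + 1))
          + γ (n + 1) * a (m + 1) := by
          nlinarith [mul_le_mul_of_nonneg_left ih (sub_nonneg.2 hγ1)]
      _ ≤ exp (-γ (n + 1)) * (exp (-∑ k ∈ Ioc m n, γ k) * r m) + a (m + 1) := by
          nlinarith [mul_le_mul_of_nonneg_right hone_sub_le (by positivity :
            0 ≤ exp (-∑ k ∈ Ioc m n, γ k) * r m)]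
      _ = exp (-∑ k ∈ Ioc m n, γ k) * exp (-γ (n + 1)) * r m + a (m + 1) := by ring

theorem isBigO_exp_neg_add_of_recursion {r γ a φ : ℕ → ℝ} {m : ℕ → ℕ} {B : ℝ}
    (hr : ∀ n, 0 ≤ r n) (ha0 : ∀ n, 0 ≤ a n) (ha : Antitone a) (hB : ∀ n, r n ≤ B)
    (hm : Tendsto m atTop atTop) (hmn : ∀ n, m n ≤ n)
    (hγ : ∀ᶠ k in atTop, 0 ≤ γ k ∧ γ k ≤ 1)
    (hrec : ∀ᶠ k in atTop, r k ≤ (1 - γ k) * r (k - 1) + γ k * a k)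
    (hφ : ∀ᶠ n in atTop, φ n ≤ ∑ k ∈ Ioc (m n) n, γ k) :
    r =O[atTop] fun n => exp (-φ n) + a (m n) := by
  obtain ⟨K, hK⟩ := eventually_atTop.1 (hγ.and hrec)
  refine IsBigO.of_bound (max B 1) ?_
  filter_upwards [hφ, hm.eventually_ge_atTop K] with n hφn hKn
  have hunroll := le_exp_neg_sum_mul_add_of_recursion (hr (m n)) (ha0 _) ha
    (fun k hk => (hK k (by omega)).1) (fun k hk => (hK k (by omega)).2) (hmn n)
  have hexp : exp (-∑ k ∈ Ioc (m n) n, γ k) ≤ exp (-φ n) := exp_le_exp.2 (neg_le_neg hφn)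
  rw [norm_of_nonneg (hr n), norm_of_nonneg (add_nonneg (exp_pos _).le (ha0 _))]
  calc r n ≤ exp (-∑ k ∈ Ioc (m n) n, γ k) * r (m n) + a (m n + 1) := hunroll
    _ ≤ exp (-φ n) * max B 1 + a (m n) * max B 1 := by
        gcongr
        · exact hr _
        · exact (hB _).trans (le_max_left _ _)
        · exact (ha (Nat.le_succ _)).trans (le_mul_of_one_le_right (ha0 _) (le_max_right _ _))
    _ = max B 1 * (exp (-φ n) + a (m n)) := by ring

theorem tendsto_add_one_div_two_atTop : Tendsto (fun n : ℕ => (n + 1) / 2) atTop atTop :=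
  (Nat.tendsto_div_const_atTop two_ne_zero).comp (tendsto_add_atTop_nat 1)

theorem tendsto_div_rpow_add_const_nhds_zero (c c' : ℝ) {g : ℝ} (hg : 0 < g) :
    Tendsto (fun k : ℕ => c / ((k : ℝ) ^ g + c')) atTop (𝓝 0) :=
  tendsto_const_nhds.div_atTop
    (tendsto_atTop_add_const_right _ c' ((tendsto_rpow_atTop hg).comp tendsto_natCast_atTop_atTop))

theorem rpow_sub_rpow_div_le_sum_Ioc_rpow_neg {g : ℝ} (hg0 : 0 ≤ g) (hg1 : g < 1) {m n : ℕ}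
    (hmn : m ≤ n) :
    (((n : ℝ) + 1) ^ (1 - g) - ((m : ℝ) + 1) ^ (1 - g)) / (1 - g)
      ≤ ∑ k ∈ Ioc m n, (k : ℝ) ^ (-g) := by
  have hanti : AntitoneOn (fun x : ℝ => x ^ (-g))
      (Set.Icc ((m : ℝ) + 1) ((m : ℝ) + 1 + (n - m : ℕ))) := fun x hx y _ hxy =>
    rpow_le_rpow_of_nonpos (by linarith [hx.1]) hxy (by linarith)
  have hend : (m : ℝ) + 1 + ((n - m : ℕ) : ℝ) = (n : ℝ) + 1 := by
    rw [Nat.cast_sub hmn]; ring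
  have hsum :
      ∑ i ∈ range (n - m), ((m : ℝ) + 1 + i) ^ (-g) = ∑ k ∈ Ioc m n, (k : ℝ) ^ (-g) := by
    rw [← Icc_add_one_left_eq_Ioc, ← Ico_add_one_right_eq_Icc, sum_Ico_eq_sum_range,
      show n + 1 - (m + 1) = n - m by omega]
    refine sum_congr rfl fun i _ => ?_
    push_cast; ring_nf
  have hint := hanti.integral_le_sum
  rwa [integral_rpow (Or.inl (by linarith)), hend, hsum, neg_add_eq_sub] at hint

theorem div_one_add_div_rpow_mul_le_sum_Ioc {c c' g : ℝ} (hc : 0 ≤ c) (hc' : 0 ≤ c')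
    (hg0 : 0 ≤ g) (hg1 : g < 1) {m n : ℕ} (hm : 0 < m) (hmn : m ≤ n) :
    c / (1 + c' / (m : ℝ) ^ g)
        * ((((n : ℝ) + 1) ^ (1 - g) - ((m : ℝ) + 1) ^ (1 - g)) / (1 - g))
      ≤ ∑ k ∈ Ioc m n, c / ((k : ℝ) ^ g + c') := by
  have hm' : (0 : ℝ) < m := by exact_mod_cast hm
  calc _ ≤ c / (1 + c' / (m : ℝ) ^ g) * ∑ k ∈ Ioc m n, (k : ℝ) ^ (-g) := by
        gcongr; exact rpow_sub_rpow_div_le_sum_Ioc_rpow_neg hg0 hg1 hmn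
    _ = ∑ k ∈ Ioc m n, c / (1 + c' / (m : ℝ) ^ g) * (k : ℝ) ^ (-g) := mul_sum _ _ _
    _ ≤ ∑ k ∈ Ioc m n, c / ((k : ℝ) ^ g + c') := sum_le_sum fun k hk => ?_
  have hmk : (m : ℝ) ≤ k := by exact_mod_cast (mem_Ioc.1 hk).1.le
  have hk : (0 : ℝ) < k := hm'.trans_le hmk
  have hpow : (m : ℝ) ^ g ≤ (k : ℝ) ^ g := rpow_le_rpow hm'.le hmk hg0
  have hc'le : c' ≤ c' / (m : ℝ) ^ g * (k : ℝ) ^ g := by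
    rw [div_mul_eq_mul_div, le_div_iff₀ (by positivity)]
    exact mul_le_mul_of_nonneg_left hpow hc'
  rw [rpow_neg hk.le, ← div_eq_mul_inv, div_div]
  exact div_le_div_of_nonneg_left hc (by positivity) (by linarith)

theorem tendsto_rpow_sub_rpow_half_div_rpow (p : ℝ) :
    Tendsto (fun n : ℕ => (((n : ℝ) + 1) ^ p - (((n : ℝ) + 3) / 2) ^ p) / (n : ℝ) ^ p) atTop
      (𝓝 (1 - 2 ^ (-p))) := by
  have h1 : Tendsto (fun n : ℕ => 1 + (n : ℝ)⁻¹) atTop (𝓝 1) := by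
    simpa using tendsto_const_nhds.add (tendsto_inv_atTop_nhds_zero_nat (𝕜 := ℝ))
  have h2 : Tendsto (fun n : ℕ => 2⁻¹ + 3 / 2 * (n : ℝ)⁻¹) atTop (𝓝 2⁻¹) := by
    simpa using tendsto_const_nhds.add
      ((tendsto_inv_atTop_nhds_zero_nat (𝕜 := ℝ)).const_mul (3 / 2))
  have hlim := (h1.rpow_const (p := p) (Or.inl one_ne_zero)).sub
    (h2.rpow_const (p := p) (Or.inl (by norm_num)))
  rw [one_rpow, inv_rpow zero_le_two, ← rpow_neg zero_le_two] at hlim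
  refine hlim.congr' ?_
  filter_upwards [eventually_gt_atTop 0] with n hn
  have hn' : (0 : ℝ) < n := by exact_mod_cast hn
  rw [sub_div, ← div_rpow (by positivity) hn'.le, ← div_rpow (by positivity) hn'.le]
  congr 2 <;> field_simp

theorem eventually_mul_rpow_le_sum_Ioc_half {c c' g κ : ℝ} (hc : 0 ≤ c) (hc' : 0 ≤ c')
    (hg0 : 0 < g) (hg1 : g < 1) (hκ : κ < c * (1 - 2 ^ (g - 1)) / (1 - g)) :
    ∀ᶠ n : ℕ in atTop,
      κ * (n : ℝ) ^ (1 - g) ≤ ∑ k ∈ Ioc ((n + 1) / 2) n, c / ((k : ℝ) ^ g + c') := by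
  have hfactor :
      Tendsto (fun n : ℕ => c / (1 + c' / (((n + 1) / 2 : ℕ) : ℝ) ^ g)) atTop (𝓝 c) := by
    have h0 : Tendsto (fun n : ℕ => c' / (((n + 1) / 2 : ℕ) : ℝ) ^ g) atTop (𝓝 0) :=
      tendsto_const_nhds.div_atTop ((tendsto_rpow_atTop hg0).comp
        (tendsto_natCast_atTop_atTop.comp tendsto_add_one_div_two_atTop))
    simpa [Pi.div_def] using
      tendsto_const_nhds.div (tendsto_const_nhds.add h0) (by norm_num : (1 : ℝ) + 0 ≠ 0)
  have hlower := (hfactor.mul (tendsto_rpow_sub_rpow_half_div_rpow (1 - g))).div_const (1 - g)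
  rw [neg_sub] at hlower
  filter_upwards [hlower.eventually_const_lt hκ, eventually_ge_atTop 1] with n hlt hn
  have hn' : (0 : ℝ) < n := by exact_mod_cast hn
  have hp : 0 < 1 - g := by linarith
  have hm : ((((n + 1) / 2 : ℕ) : ℝ) + 1) ≤ ((n : ℝ) + 3) / 2 := by
    have : 2 * ((n + 1) / 2) ≤ n + 1 := Nat.mul_div_le _ _
    rw [le_div_iff₀ two_pos]; exact_mod_cast (by omega : ((n + 1) / 2 + 1) * 2 ≤ n + 3)
  calc κ * (n : ℝ) ^ (1 - g)
      ≤ c / (1 + c' / (((n + 1) / 2 : ℕ) : ℝ) ^ g)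
          * ((((n : ℝ) + 1) ^ (1 - g) - (((n : ℝ) + 3) / 2) ^ (1 - g)) / (n : ℝ) ^ (1 - g))
          / (1 - g) * (n : ℝ) ^ (1 - g) := by gcongr
    _ = c / (1 + c' / (((n + 1) / 2 : ℕ) : ℝ) ^ g)
          * ((((n : ℝ) + 1) ^ (1 - g) - (((n : ℝ) + 3) / 2) ^ (1 - g)) / (1 - g)) := by
        field_simp
    _ ≤ c / (1 + c' / (((n + 1) / 2 : ℕ) : ℝ) ^ g)
          * ((((n : ℝ) + 1) ^ (1 - g) - ((((n + 1) / 2 : ℕ) : ℝ) + 1) ^ (1 - g))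
            / (1 - g)) := by
        gcongr
    _ ≤ _ := div_one_add_div_rpow_mul_le_sum_Ioc hc hc' hg0.le hg1 (by omega) (by omega)

/-- for nonnegative `r_n` with
`r_n ≤ (1-γ_n) r_{n-1} + γ_n a_n` for `n > n₀`, `γ_n = c/(n^γ + c')`, `γ ∈ (0,1)`,
`a` nonincreasing tending to `0`, then for any
`0 < κ < c(1 - 2^{γ-1})/(1-γ)` there exists `C` with
`r_n ≤ C(exp(-κ n^{1-γ}) + a_{⌈n/2⌉})` for all `n`; in particular `r_n → 0`. -/
theorem recursive_bound_polynomial_steps (r γseq a : ℕ → ℝ) (n0 : ℕ)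
    (c c' g : ℝ) (hc : 0 < c) (hc' : 0 ≤ c') (hg0 : 0 < g) (hg1 : g < 1)
    (hγ : ∀ n : ℕ, γseq n = c / ((n : ℝ) ^ g + c'))
    (hr : ∀ n, 0 ≤ r n) (ha : ∀ n, 0 ≤ a n)
    (hamono : ∀ m n : ℕ, m ≤ n → a n ≤ a m)
    (halim : Tendsto a atTop (nhds 0))
    (hrec : ∀ n, n0 < n → r n ≤ (1 - γseq n) * r (n - 1) + γseq n * a n) :
    (∀ κ : ℝ, 0 < κ → κ < c * (1 - (2:ℝ) ^ (g - 1)) / (1 - g) →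
      ∃ C : ℝ, ∀ n : ℕ,
        r n ≤ C * (Real.exp (-κ * (n : ℝ) ^ (1 - g)) + a ((n + 1) / 2))) ∧
    Tendsto r atTop (nhds 0) := by
  obtain rfl : γseq = fun n : ℕ => c / ((n : ℝ) ^ g + c') := funext hγ
  have hγ0 (n : ℕ) : 0 ≤ c / ((n : ℝ) ^ g + c') := by positivity
  have hγc (n : ℕ) (hn : 0 < n) : c / ((n : ℝ) ^ g + c') ≤ c :=
    div_le_self hc.le (by linarith [one_le_rpow (by exact_mod_cast hn : (1 : ℝ) ≤ n) hg0.le])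
  have hγ1 :
      ∀ᶠ k : ℕ in atTop, 0 ≤ c / ((k : ℝ) ^ g + c') ∧ c / ((k : ℝ) ^ g + c') ≤ 1 :=
    ((tendsto_div_rpow_add_const_nhds_zero c c' hg0).eventually_lt_const one_pos).mono
      fun k hk => ⟨hγ0 k, hk.le⟩
  have hanti : Antitone a := fun m n h => hamono m n h
  obtain ⟨B, hB⟩ := exists_forall_le_of_recursion hr ha hanti
    (fun n hn => ⟨hγ0 n, hγc n (by omega)⟩) hrec
  have hbigO (κ : ℝ) (hκ : κ < c * (1 - 2 ^ (g - 1)) / (1 - g)) :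
      r =O[atTop] fun n => exp (-κ * (n : ℝ) ^ (1 - g)) + a ((n + 1) / 2) := by
    simpa only [neg_mul] using isBigO_exp_neg_add_of_recursion hr ha hanti hB
      tendsto_add_one_div_two_atTop (by omega) hγ1 ((eventually_gt_atTop n0).mono hrec)
      (eventually_mul_rpow_le_sum_Ioc_half hc.le hc' hg0 hg1 hκ)
  refine ⟨fun κ _ hκ => ?_, ?_⟩
  · have hpos (n : ℕ) : 0 < exp (-κ * (n : ℝ) ^ (1 - g)) + a ((n + 1) / 2) :=
      add_pos_of_pos_of_nonneg (exp_pos _) (ha _)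
    obtain ⟨C, hC⟩ := (isBigO_nat_atTop_iff fun n h => absurd h (hpos n).ne').1 (hbigO κ hκ)
    refine ⟨C, fun n => ?_⟩
    simpa only [norm_of_nonneg (hr n), norm_of_nonneg (hpos n).le] using hC n
  · have hL : 0 < c * (1 - 2 ^ (g - 1)) / (1 - g) := by
      have : (2 : ℝ) ^ (g - 1) < 1 := rpow_lt_one_of_one_lt_of_neg one_lt_two (by linarith)
      exact div_pos (mul_pos hc (by linarith)) (by linarith)
    refine (hbigO _ (half_lt_self hL)).trans_tendsto ?_
    have hpow := (tendsto_rpow_atTop (by linarith : 0 < 1 - g)).comp tendsto_natCast_atTop_atTop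
    have hexp := tendsto_exp_neg_atTop_nhds_zero.comp (hpow.const_mul_atTop (half_pos hL))
    simpa [Function.comp_def, neg_mul] using hexp.add (halim.comp tendsto_add_one_div_two_atTop)
end

section
/- Let (r_n), (s_n), (a_n) be nonnegative real sequences with r_n ≤ (1 - γ_n) r_{n-1} + γ_n a_n (s_n + r_n) for n ≥ n_0, where γ_n = c_γ n^{-γ}, γ ∈ (1/2, 1), c_γ > 0. Assume (a_n) is nonincreasing with limit 0, and s_n ≤ M v_n for some constant M and some positive nondecreasing sequence (v_n). Then for any 0 < κ < c_γ(1 - 2^{γ-1})/(1-γ), there is a constant C with r_n ≤ C(exp(-κ n^{1-γ}) + a_{⌈n/2⌉}) v_n for all sufficiently large n. -/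
open Filter

lemma rpow_succ_sub_le (x p : ℝ) (hx : 1 ≤ x) (hp0 : 0 < p) (hp1 : p ≤ 1) :
    (x + 1) ^ p - x ^ p ≤ p * x ^ (p - 1) := by
  have hx0 : 0 < x := lt_of_lt_of_le one_pos hx
  have h1 : (x + 1) ^ p = x ^ p * (1 + 1/x) ^ p := by
    rw [← Real.mul_rpow hx0.le (by positivity)]
    congr 1
    field_simp
  have h2 : (1 + 1/x : ℝ) ^ p ≤ 1 + p * (1/x) :=
    rpow_one_add_le_one_add_mul_self ((by positivity : (0:ℝ) ≤ 1/x).trans' (by norm_num)) hp0.le hp1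
  have h3 : x ^ p * (1 + p * (1/x)) = x ^ p + p * x ^ (p - 1) := by
    rw [Real.rpow_sub hx0, Real.rpow_one]
    field_simp
  have h4 : (0:ℝ) ≤ x ^ p := (Real.rpow_pos_of_pos hx0 p).le
  nlinarith [mul_le_mul_of_nonneg_left h2 h4]

set_option maxHeartbeats 2000000 in
/-- for nonnegative sequences with
`r_n ≤ (1-γ_n) r_{n-1} + γ_n a_n (s_n + r_n)` for `n ≥ n₀`, `γ_n = c_γ n^{-γ}`,
`γ ∈ (1/2,1)`, `a` nonincreasing with limit `0`, `s_n ≤ M v_n` with `v` positive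
nondecreasing, then for any `0 < κ < c_γ(1-2^{γ-1})/(1-γ)` there is `C` with
`r_n ≤ C(exp(-κ n^{1-γ}) + a_{⌈n/2⌉}) v_n` for all sufficiently large `n`. -/
theorem recursive_bound_with_scale (r s a v : ℕ → ℝ) (γseq : ℕ → ℝ) (n0 : ℕ)
    (cγ g M : ℝ) (hcγ : 0 < cγ) (hg0 : 1 / 2 < g) (hg1 : g < 1)
    (hγ : ∀ n : ℕ, γseq n = cγ * (n : ℝ) ^ (-g))
    (hr : ∀ n, 0 ≤ r n) (hs : ∀ n, 0 ≤ s n) (ha : ∀ n, 0 ≤ a n)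
    (hamono : ∀ m n : ℕ, m ≤ n → a n ≤ a m)
    (halim : Tendsto a atTop (nhds 0))
    (hv : ∀ n, 0 < v n) (hvmono : ∀ m n : ℕ, m ≤ n → v m ≤ v n)
    (hsv : ∀ n, s n ≤ M * v n)
    (hrec : ∀ n, n0 ≤ n → r n ≤ (1 - γseq n) * r (n - 1) + γseq n * a n * (s n + r n)) :
    ∀ κ : ℝ, 0 < κ → κ < cγ * (1 - (2:ℝ) ^ (g - 1)) / (1 - g) →
      ∃ C : ℝ, ∃ N : ℕ, ∀ n : ℕ, N ≤ n →
        r n ≤ C * (Real.exp (-κ * (n : ℝ) ^ (1 - g)) + a ((n + 1) / 2)) * v n := by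
  intro κ hκ0 hκL
  set p : ℝ := 1 - g with hpdef
  clear_value p
  have hp0 : 0 < p := by simp only [hpdef]; linarith
  have hp1 : p < 1 := by simp only [hpdef]; linarith
  have hM : 0 ≤ M := by nlinarith [hv 0, hs 0, hsv 0]
  have h2g : (2:ℝ) ^ (g - 1) < 1 :=
    Real.rpow_lt_one_of_one_lt_of_neg one_lt_two (by linarith)
  have h2gpos : (0:ℝ) < (2:ℝ) ^ (g - 1) := Real.rpow_pos_of_pos two_pos _
  set L : ℝ := cγ * (1 - (2:ℝ) ^ (g - 1)) / p with hLdef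
  clear_value L
  have hL : 0 < L := by
    rw [hLdef]
    apply div_pos
    · nlinarith
    · exact hp0
  set ε : ℝ := (1 - κ / L) / 2 with hεdef
  clear_value ε
  have hκL1 : κ / L < 1 := (div_lt_one hL).2 hκL
  have hκL0 : 0 < κ / L := div_pos hκ0 hL
  have hε0 : 0 < ε := by simp only [hεdef]; linarith
  have hεhalf : ε ≤ 1 / 2 := by simp only [hεdef]; linarith
  set q : ℝ := 1 - ε with hqdef
  clear_value q
  have hq0 : 0 < q := by simp only [hqdef]; linarith
  have hq1 : q ≤ 1 := by simp only [hqdef]; linarith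
  have hκq : κ < q * L := by
    have hqL : q * L = (L + κ) / 2 := by
      simp only [hqdef, hεdef]
      field_simp
      ring
    rw [hqL]
    have : κ < L := by
      calc κ = κ / L * L := by field_simp
      _ < 1 * L := by exact mul_lt_mul_of_pos_right hκL1 hL
      _ = L := one_mul L
    linarith
  have hγ0 : ∀ n, 0 ≤ γseq n := by
    intro n; rw [hγ]; positivity
  -- γseq tends to 0
  have hγlim : Tendsto γseq atTop (nhds 0) := by
    have h1 : Tendsto (fun x : ℝ => x ^ (-g)) atTop (nhds 0) :=
      tendsto_rpow_neg_atTop (by linarith)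
    have h2 : Tendsto (fun n : ℕ => ((n:ℝ)) ^ (-g)) atTop (nhds 0) :=
      h1.comp tendsto_natCast_atTop_atTop
    have h3 := h2.const_mul cγ
    rw [mul_zero] at h3
    exact h3.congr fun n => (hγ n).symm
  -- choice of N1
  obtain ⟨N1, hN1⟩ : ∃ N1 : ℕ, ∀ n, N1 ≤ n → a n ≤ ε ∧ γseq n ≤ 1/2 ∧ n0 ≤ n ∧ 1 ≤ n := by
    have e1 : ∀ᶠ n : ℕ in atTop, a n ≤ ε := halim.eventually (eventually_le_nhds hε0)
    have e2 : ∀ᶠ n : ℕ in atTop, γseq n ≤ 1/2 := hγlim.eventually (eventually_le_nhds (by norm_num))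
    have e3 : ∀ᶠ n : ℕ in atTop, n0 ≤ n := eventually_ge_atTop n0
    have e4 : ∀ᶠ n : ℕ in atTop, 1 ≤ n := eventually_ge_atTop 1
    exact eventually_atTop.1 ((e1.and (e2.and (e3.and e4))).mono (by tauto))
  set u : ℕ → ℝ := fun n => r n / v n with hudef
  have hu0 : ∀ n, 0 ≤ u n := fun n => div_nonneg (hr n) (hv n).le
  have huv : ∀ n, u n * v n = r n := fun n => div_mul_cancel₀ _ (hv n).ne'
  clear_value u
  -- the key one-step recursion for u
  have hstep : ∀ n, N1 + 1 ≤ n → u n ≤ (1 - q * γseq n) * u (n-1) + 2*M*(γseq n * a n) := by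
    intro n hn
    obtain ⟨hA, hG, hn0le, -⟩ := hN1 n (by omega)
    have hG0 : 0 ≤ γseq n := hγ0 n
    have hA0 : 0 ≤ a n := ha n
    have hAh : a n ≤ 1/2 := hA.trans hεhalf
    have hGA : γseq n * a n ≤ 1/4 := by nlinarith
    have hGA0 : 0 ≤ γseq n * a n := mul_nonneg hG0 hA0
    have hrec' := hrec n hn0le
    have h1 : (1 - γseq n * a n) * r n ≤ (1 - γseq n) * r (n-1) + γseq n * a n * (M * v n) := by
      have hint := mul_le_mul_of_nonneg_left (hsv n) hGA0
      linarith [hrec', hint]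
    have hv' : v (n-1) ≤ v n := hvmono _ _ (Nat.sub_le n 1)
    have hrn1 : r (n-1) ≤ u (n-1) * v n := by
      calc r (n-1) = u (n-1) * v (n-1) := (huv _).symm
      _ ≤ u (n-1) * v n := mul_le_mul_of_nonneg_left hv' (hu0 _)
    have h2 : (1 - γseq n * a n) * r n ≤ ((1 - γseq n) * u (n-1) + γseq n * a n * M) * v n := by
      have hint := mul_le_mul_of_nonneg_left hrn1 (show (0:ℝ) ≤ 1 - γseq n by linarith)
      calc (1 - γseq n * a n) * r n ≤ (1 - γseq n) * r (n-1) + γseq n * a n * (M * v n) := h1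
      _ ≤ (1 - γseq n) * (u (n-1) * v n) + γseq n * a n * (M * v n) := by linarith
      _ = ((1 - γseq n) * u (n-1) + γseq n * a n * M) * v n := by ring
    -- suffices to compare coefficients
    have h3 : ((1 - γseq n) * u (n-1) + γseq n * a n * M) ≤
        (1 - γseq n * a n) * ((1 - q * γseq n) * u (n-1) + 2*M*(γseq n * a n)) := by
      have hu' : 0 ≤ u (n-1) := hu0 _
      have hqε : (1:ℝ) - q = ε := by rw [hqdef]; ring
      have e1 : 0 ≤ γseq n * u (n-1) * ((1 - q) - a n) := by
        apply mul_nonneg (mul_nonneg hG0 hu'); rw [hqε]; linarith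
      have e2 : 0 ≤ γseq n * u (n-1) * (a n * (q * γseq n)) := by positivity
      have e3 : 0 ≤ M * (γseq n * a n) * (1 - 2 * (γseq n * a n)) := by
        apply mul_nonneg (mul_nonneg hM hGA0); linarith
      have heq : (1 - γseq n * a n) * ((1 - q * γseq n) * u (n-1) + 2*M*(γseq n * a n))
          - ((1 - γseq n) * u (n-1) + γseq n * a n * M)
          = γseq n * u (n-1) * ((1 - q) - a n) + γseq n * u (n-1) * (a n * (q * γseq n))
            + M * (γseq n * a n) * (1 - 2 * (γseq n * a n)) := by ring
      linarith [e1, e2, e3, heq.ge, heq.le]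
    have h4 : 0 < 1 - γseq n * a n := by linarith
    have h5 := h2.trans (mul_le_mul_of_nonneg_right h3 (hv n).le)
    have h6 : (1 - γseq n * a n) * (u n * v n) ≤
        (1 - γseq n * a n) * (((1 - q * γseq n) * u (n-1) + 2*M*(γseq n * a n)) * v n) := by
      rw [huv]
      calc (1 - γseq n * a n) * r n
          ≤ (1 - γseq n * a n) * ((1 - q * γseq n) * u (n-1) + 2*M*(γseq n * a n)) * v n := h5
      _ = (1 - γseq n * a n) * (((1 - q * γseq n) * u (n-1) + 2*M*(γseq n * a n)) * v n) := by ring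
    exact le_of_mul_le_mul_right (le_of_mul_le_mul_left h6 h4) (hv n)
  -- boundedness of u
  set U : ℝ := max (u N1) (2*M*(a N1)/q) with hUdef
  have hUu : u N1 ≤ U := le_max_left _ _
  have hU2 : 2*M*(a N1) ≤ q * U := by
    have := le_max_right (u N1) (2*M*(a N1)/q)
    calc 2*M*(a N1) = q * (2*M*(a N1)/q) := by field_simp
    _ ≤ q * U := mul_le_mul_of_nonneg_left this hq0.le
  have hU0 : 0 ≤ U := (hu0 N1).trans hUu
  clear_value U
  have hUb : ∀ n, N1 ≤ n → u n ≤ U := by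
    intro n hn
    induction n, hn using Nat.le_induction with
    | base => exact hUu
    | succ n hn ih =>
      have h1 := hstep (n+1) (by omega)
      simp only [Nat.add_sub_cancel] at h1
      obtain ⟨-, hG, -, -⟩ := hN1 (n+1) (by omega)
      have hG0 : 0 ≤ γseq (n+1) := hγ0 _
      have hqG : 0 ≤ 1 - q * γseq (n+1) := by nlinarith
      have haa : a (n+1) ≤ a N1 := hamono _ _ (by omega)
      have hMa : 2*M*(γseq (n+1) * a (n+1)) ≤ γseq (n+1) * (2*M*(a N1)) := by
        have := mul_le_mul_of_nonneg_left haa (show (0:ℝ) ≤ 2*M*γseq (n+1) by positivity)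
        linarith [this]
      calc u (n+1) ≤ (1 - q * γseq (n+1)) * u n + 2*M*(γseq (n+1) * a (n+1)) := h1
      _ ≤ (1 - q * γseq (n+1)) * U + γseq (n+1) * (q * U) := by
          have t1 := mul_le_mul_of_nonneg_left ih hqG
          have t2 := mul_le_mul_of_nonneg_left hU2 hG0
          linarith [t1, t2, hMa]
      _ = U := by ring
  -- unrolled bound
  have hB : ∀ m, N1 ≤ m → ∀ n, m ≤ n →
      u n ≤ U * (∏ j ∈ Finset.Icc (m+1) n, (1 - q * γseq j)) + (2*M/q) * a (m+1) := by
    intro m hm n hn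
    have hMq : 0 ≤ 2*M/q := by positivity
    induction n, hn using Nat.le_induction with
    | base =>
      rw [Finset.Icc_eq_empty (by omega), Finset.prod_empty, mul_one]
      have : 0 ≤ (2*M/q) * a (m+1) := mul_nonneg hMq (ha _)
      linarith [hUb m hm]
    | succ n hn ih =>
      have hfac : ∀ j ∈ Finset.Icc (m+1) (n+1), 0 ≤ 1 - q * γseq j := by
        intro j hj
        simp only [Finset.mem_Icc] at hj
        obtain ⟨-, hGj, -, -⟩ := hN1 j (by omega)
        have := mul_le_mul hq1 hGj (hγ0 j) zero_le_one
        linarith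
      have hP0 : 0 ≤ ∏ j ∈ Finset.Icc (m+1) n, (1 - q * γseq j) :=
        Finset.prod_nonneg (fun j hj => hfac j (by simp only [Finset.mem_Icc] at hj ⊢; omega))
      have h1 := hstep (n+1) (by omega)
      simp only [Nat.add_sub_cancel] at h1
      have hc : 0 ≤ 1 - q * γseq (n+1) := hfac (n+1) (by simp; omega)
      have haa : a (n+1) ≤ a (m+1) := hamono _ _ (by omega)
      have hG0 : 0 ≤ γseq (n+1) := hγ0 _
      rw [Finset.prod_Icc_succ_top (by omega : m+1 ≤ n+1)]
      calc u (n+1) ≤ (1 - q * γseq (n+1)) * u n + 2*M*(γseq (n+1) * a (n+1)) := h1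
      _ ≤ (1 - q * γseq (n+1)) * (U * (∏ j ∈ Finset.Icc (m+1) n, (1 - q * γseq j)) + (2*M/q) * a (m+1))
            + 2*M*(γseq (n+1) * a (m+1)) := by
          have t1 := mul_le_mul_of_nonneg_left ih hc
          have t2 : 2*M*(γseq (n+1) * a (n+1)) ≤ 2*M*(γseq (n+1) * a (m+1)) := by
            apply mul_le_mul_of_nonneg_left _ (by positivity)
            exact mul_le_mul_of_nonneg_left haa hG0
          linarith
      _ = U * ((∏ j ∈ Finset.Icc (m+1) n, (1 - q * γseq j)) * (1 - q * γseq (n+1)))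
            + (2*M/q) * a (m+1) := by
          field_simp
          ring
  -- product vs exponential
  have hPE : ∀ m, N1 ≤ m → ∀ n, (∏ j ∈ Finset.Icc (m+1) n, (1 - q * γseq j)) ≤
      Real.exp (-(q * ∑ j ∈ Finset.Icc (m+1) n, γseq j)) := by
    intro m hm n
    calc ∏ j ∈ Finset.Icc (m+1) n, (1 - q * γseq j)
        ≤ ∏ j ∈ Finset.Icc (m+1) n, Real.exp (-(q * γseq j)) := by
          apply Finset.prod_le_prod
          · intro j hj
            simp only [Finset.mem_Icc] at hj
            obtain ⟨-, hGj, -, -⟩ := hN1 j (by omega)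
            have := mul_le_mul hq1 hGj (hγ0 j) zero_le_one
            linarith
          · intro j hj
            have := Real.add_one_le_exp (-(q * γseq j))
            linarith
    _ = Real.exp (∑ j ∈ Finset.Icc (m+1) n, -(q * γseq j)) := (Real.exp_sum _ _).symm
    _ = Real.exp (-(q * ∑ j ∈ Finset.Icc (m+1) n, γseq j)) := by
        congr 1
        rw [Finset.mul_sum, ← Finset.sum_neg_distrib]
  -- telescoping lower bound for the sum
  have hsum : ∀ m : ℕ, 1 ≤ m → ∀ n : ℕ, m ≤ n →
      (((n:ℝ)+1)^p - ((m:ℝ)+1)^p)/p ≤ ∑ j ∈ Finset.Icc (m+1) n, ((j:ℝ)) ^ (-g) := by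
    intro m hm n hn
    induction n, hn using Nat.le_induction with
    | base => rw [Finset.Icc_eq_empty (by omega)]; simp
    | succ n hn ih =>
      rw [Finset.sum_Icc_succ_top (by omega : m+1 ≤ n+1)]
      have hx : (1:ℝ) ≤ (n:ℝ)+1 := by
        have : (0:ℝ) ≤ (n:ℝ) := Nat.cast_nonneg n
        linarith
      have hb := rpow_succ_sub_le ((n:ℝ)+1) p hx hp0 hp1.le
      have hpg : p - 1 = -g := by rw [hpdef]; ring
      rw [hpg] at hb
      push_cast
      have h3 : (((n:ℝ)+1+1)^p - ((n:ℝ)+1)^p)/p ≤ ((n:ℝ)+1)^(-g) := by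
        rw [div_le_iff₀ hp0]
        nlinarith [hb]
      have h2 : (((n:ℝ)+1+1)^p - ((m:ℝ)+1)^p)/p
          = (((n:ℝ)+1)^p - ((m:ℝ)+1)^p)/p + (((n:ℝ)+1+1)^p - ((n:ℝ)+1)^p)/p := by
        ring
      linarith [ih]
  have hγsum : ∀ m n : ℕ, ∑ j ∈ Finset.Icc (m+1) n, γseq j
      = cγ * ∑ j ∈ Finset.Icc (m+1) n, ((j:ℝ))^(-g) := by
    intro m n
    rw [Finset.mul_sum]
    exact Finset.sum_congr rfl (fun j _ => hγ j)
  -- (1/2)^p = 2^(g-1)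
  have hhalf : ((1:ℝ)/2) ^ p = (2:ℝ) ^ (g-1) := by
    rw [one_div, Real.inv_rpow (by norm_num : (0:ℝ) ≤ 2),
      ← Real.rpow_neg (by norm_num : (0:ℝ) ≤ 2)]
    congr 1
    rw [hpdef]; ring
  -- the limit argument
  have hfn : Tendsto (fun n : ℕ => (((n:ℝ)+3)/2/(n:ℝ)) ^ p) atTop (nhds ((2:ℝ)^(g-1))) := by
    have h1 : Tendsto (fun n : ℕ => ((n:ℝ)+3)/2/(n:ℝ)) atTop (nhds (1/2)) := by
      have h2 : Tendsto (fun n : ℕ => 1/2 + (3/2) * (1/(n:ℝ))) atTop (nhds (1/2 + (3/2)*0)) :=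
        tendsto_const_nhds.add (tendsto_one_div_atTop_nhds_zero_nat.const_mul _)
      rw [mul_zero, add_zero] at h2
      apply h2.congr'
      filter_upwards [eventually_ge_atTop 1] with n hn
      have hn0 : (0:ℝ) < (n:ℝ) := by exact_mod_cast hn
      field_simp
    have hc : ContinuousAt (fun x : ℝ => x ^ p) (1/2) :=
      Real.continuousAt_rpow_const _ _ (Or.inl (by norm_num))
    have h3 := hc.tendsto.comp h1
    rw [Function.comp_def] at h3
    rwa [hhalf] at h3
  have hTend : Tendsto (fun n : ℕ => q * cγ * (1 - (((n:ℝ)+3)/2/(n:ℝ)) ^ p) / p)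
      atTop (nhds (q * L)) := by
    have hql : q * L = q * cγ * (1 - (2:ℝ)^(g-1)) / p := by rw [hLdef]; ring
    rw [hql]
    exact ((tendsto_const_nhds.sub hfn).const_mul (q*cγ)).div_const p
  obtain ⟨N2, hN2⟩ := eventually_atTop.1 (hTend.eventually (eventually_gt_nhds hκq))
  -- final assembly
  refine ⟨max U (2*M/q), max (2*N1+2) (max N2 4), ?_⟩
  intro n hn
  have hn1' : 2*N1+2 ≤ n := le_trans (le_max_left _ _) hn
  have hn2' : N2 ≤ n := le_trans (le_trans (le_max_left _ _) (le_max_right _ _)) hn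
  have hn4' : 4 ≤ n := le_trans (le_trans (le_max_right _ _) (le_max_right _ _)) hn
  set m := (n+1)/2 with hmdef
  have hm1 : N1 ≤ m := by omega
  have hm2 : 1 ≤ m := by omega
  have hm3 : m ≤ n := by omega
  have hn1 : (1:ℝ) ≤ (n:ℝ) := by exact_mod_cast (by omega : 1 ≤ n)
  have hnpos : (0:ℝ) < (n:ℝ) := by linarith
  have hnp : (0:ℝ) < (n:ℝ)^p := Real.rpow_pos_of_pos hnpos p
  have hmr : ((m:ℝ)+1) ≤ ((n:ℝ)+3)/2 := by
    have h2m : 2*m ≤ n+1 := by omega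
    have : ((2*m : ℕ):ℝ) ≤ ((n+1 : ℕ):ℝ) := by exact_mod_cast h2m
    push_cast at this
    linarith
  have hstep1 : ((m:ℝ)+1)^p ≤ (((n:ℝ)+3)/2)^p :=
    Real.rpow_le_rpow (by positivity) hmr hp0.le
  have hfneq : (((n:ℝ)+3)/2/(n:ℝ))^p * (n:ℝ)^p = (((n:ℝ)+3)/2)^p := by
    rw [← Real.mul_rpow (by positivity) hnpos.le]
    congr 1
    field_simp
  have hnp1 : (n:ℝ)^p ≤ ((n:ℝ)+1)^p := Real.rpow_le_rpow hnpos.le (by linarith) hp0.le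
  have hEvn := hN2 n hn2'
  have hκsum : κ * (n:ℝ)^p ≤ q * ∑ j ∈ Finset.Icc (m+1) n, γseq j := by
    have h1 : κ * (n:ℝ)^p ≤ (q * cγ * (1 - (((n:ℝ)+3)/2/(n:ℝ))^p)/p) * (n:ℝ)^p :=
      mul_le_mul_of_nonneg_right hEvn.le hnp.le
    have h2 : (q * cγ * (1 - (((n:ℝ)+3)/2/(n:ℝ))^p)/p) * (n:ℝ)^p
        = (q*cγ/p) * ((n:ℝ)^p - (((n:ℝ)+3)/2/(n:ℝ))^p * (n:ℝ)^p) := by ring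
    have h3 : (n:ℝ)^p - (((n:ℝ)+3)/2)^p ≤ ((n:ℝ)+1)^p - ((m:ℝ)+1)^p := by linarith
    have hqcp : (0:ℝ) ≤ q*cγ/p := by positivity
    have h4 := mul_le_mul_of_nonneg_left h3 hqcp
    have h5 := hsum m hm2 n hm3
    have h6 := mul_le_mul_of_nonneg_left h5 (by positivity : (0:ℝ) ≤ q * cγ)
    calc κ * (n:ℝ)^p ≤ (q*cγ/p) * ((n:ℝ)^p - (((n:ℝ)+3)/2/(n:ℝ))^p * (n:ℝ)^p) := by
          rw [← h2]; exact h1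
    _ = (q*cγ/p) * ((n:ℝ)^p - (((n:ℝ)+3)/2)^p) := by rw [hfneq]
    _ ≤ (q*cγ/p) * (((n:ℝ)+1)^p - ((m:ℝ)+1)^p) := h4
    _ = (q*cγ) * ((((n:ℝ)+1)^p - ((m:ℝ)+1)^p)/p) := by ring
    _ ≤ (q*cγ) * ∑ j ∈ Finset.Icc (m+1) n, ((j:ℝ))^(-g) := h6
    _ = q * ∑ j ∈ Finset.Icc (m+1) n, γseq j := by rw [hγsum m n]; ring
  have hub := hB m hm1 n hm3
  have hPEm := hPE m hm1 n
  have hexp : Real.exp (-(q * ∑ j ∈ Finset.Icc (m+1) n, γseq j))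
      ≤ Real.exp (-κ * (n:ℝ)^p) := by
    rw [Real.exp_le_exp, neg_mul]
    exact neg_le_neg hκsum
  have hexp0 : (0:ℝ) ≤ Real.exp (-κ*(n:ℝ)^p) := (Real.exp_pos _).le
  have hCU : U ≤ max U (2*M/q) := le_max_left _ _
  have hCM : 2*M/q ≤ max U (2*M/q) := le_max_right _ _
  have hC0 : (0:ℝ) ≤ max U (2*M/q) := le_trans hU0 hCU
  have t1 : U * (∏ j ∈ Finset.Icc (m+1) n, (1 - q * γseq j))
      ≤ max U (2*M/q) * Real.exp (-κ*(n:ℝ)^p) := by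
    calc U * (∏ j ∈ Finset.Icc (m+1) n, (1 - q * γseq j))
        ≤ U * Real.exp (-(q * ∑ j ∈ Finset.Icc (m+1) n, γseq j)) :=
          mul_le_mul_of_nonneg_left hPEm hU0
    _ ≤ U * Real.exp (-κ*(n:ℝ)^p) := mul_le_mul_of_nonneg_left hexp hU0
    _ ≤ max U (2*M/q) * Real.exp (-κ*(n:ℝ)^p) := mul_le_mul_of_nonneg_right hCU hexp0
  have t2 : (2*M/q) * a (m+1) ≤ max U (2*M/q) * a m := by
    have haam : a (m+1) ≤ a m := hamono _ _ (by omega)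
    calc (2*M/q) * a (m+1) ≤ max U (2*M/q) * a (m+1) :=
          mul_le_mul_of_nonneg_right hCM (ha _)
    _ ≤ max U (2*M/q) * a m := mul_le_mul_of_nonneg_left haam hC0
  have hfin : u n ≤ max U (2*M/q) * (Real.exp (-κ*(n:ℝ)^p) + a m) := by
    have : max U (2*M/q) * (Real.exp (-κ*(n:ℝ)^p) + a m)
        = max U (2*M/q) * Real.exp (-κ*(n:ℝ)^p) + max U (2*M/q) * a m := by ring
    rw [this]
    linarith [hub, t1, t2]
  calc r n = u n * v n := (huv n).symm
  _ ≤ (max U (2*M/q) * (Real.exp (-κ*(n:ℝ)^p) + a m)) * v n :=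
      mul_le_mul_of_nonneg_right hfin (hv n).le
end
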